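/- arXiv:0903.2761 — 4 statements merged into one kernel-verified Lean document; each statement's English description precedes it below -/
import Mathlib

section
/- The only zero of the polynomial system P₁ = 6yz + x² − y² − z², P₂ = 6xz + y² − x² − z², P₃ = 6xy + z² − y² − x² in the closed first octant {x,y,z ≥ 0} is the origin (0,0,0). -/
/-- The only zero of the system P₁ = 6yz + x² − y² − z², P₂ = 6xz + y² − x² − z²,
P₃ = 6xy + z² − y² − x² in the closed first octant is the origin. -/
theorem stmt3 (x y z : ℝ) (hx : 0 ≤ x) (hy : 0 ≤ y) (hz : 0 ≤ z)
    (h1 : 6*y*z + x^2 - y^2 - z^2 = 0)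
    (h2 : 6*x*z + y^2 - x^2 - z^2 = 0)
    (h3 : 6*x*y + z^2 - y^2 - x^2 = 0) :
    x = 0 ∧ y = 0 ∧ z = 0 := by
  have ex : x * (x - 3*(y+z)) = 0 := by linear_combination (-1/2)*h2 + (-1/2)*h3
  have ey : y * (y - 3*(x+z)) = 0 := by linear_combination (-1/2)*h1 + (-1/2)*h3
  have ez : z * (z - 3*(x+y)) = 0 := by linear_combination (-1/2)*h1 + (-1/2)*h2
  rcases mul_eq_zero.mp ex with hx0 | hx3 <;>
  rcases mul_eq_zero.mp ey with hy0 | hy3 <;>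
  rcases mul_eq_zero.mp ez with hz0 | hz3 <;>
  refine ⟨by linarith, by linarith, by linarith⟩
end

section
/- The line t ↦ (t, (2+2√2)t, t), t > 0, is invariant under the vector field X(x,y,z) = (6yz + x² − y² − z², 6xz + y² − x² − z², 6xy + z² − y² − x²): for all t > 0, X(t, (2+2√2)t, t) is a scalar multiple of the direction vector (1, 2+2√2, 1). -/
def X (p : ℝ × ℝ × ℝ) : ℝ × ℝ × ℝ :=
  (6*p.2.1*p.2.2 + p.1^2 - p.2.1^2 - p.2.2^2,
   6*p.1*p.2.2 + p.2.1^2 - p.1^2 - p.2.2^2,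
   6*p.1*p.2.1 + p.2.2^2 - p.2.1^2 - p.1^2)

/-- The line t ↦ (t, (2+2√2)t, t), t > 0, is invariant under X: the field there
is a scalar multiple of the direction vector (1, 2+2√2, 1). -/
theorem stmt5 (t : ℝ) (ht : 0 < t) :
    ∃ μ : ℝ, X (t, (2 + 2*Real.sqrt 2)*t, t) = μ • ((1 : ℝ), 2 + 2*Real.sqrt 2, (1 : ℝ)) := by
  have h2 : Real.sqrt 2 ^ 2 = 2 := Real.sq_sqrt (by norm_num)
  refine ⟨4 * Real.sqrt 2 * t^2, ?_⟩
  simp only [X, Prod.smul_mk, smul_eq_mul, Prod.mk.injEq]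
  refine ⟨by nlinarith, by nlinarith, by nlinarith⟩
end

section
/- Let v = ((−1+√2)/2, (−1+√2)/2, 1). The line through the origin with direction vector v is invariant under the vector field X(x,y,z) = (6yz + x² − y² − z², 6xz + y² − x² − z², 6xy + z² − y² − x²): for every s > 0, X(s·v) is a positive scalar multiple of v. -/
/-- The ray with direction v = ((−1+√2)/2, (−1+√2)/2, 1) is invariant under X:
for every s > 0, X(s·v) is a positive scalar multiple of v. -/
theorem stmt6 (s : ℝ) (hs : 0 < s) :
    ∃ μ : ℝ, 0 < μ ∧
      X (s • (((-1 + Real.sqrt 2)/2 : ℝ), ((-1 + Real.sqrt 2)/2 : ℝ), (1 : ℝ)))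
        = μ • (((-1 + Real.sqrt 2)/2 : ℝ), ((-1 + Real.sqrt 2)/2 : ℝ), (1 : ℝ)) := by
  have h2 : Real.sqrt 2 ^ 2 = 2 := Real.sq_sqrt (by norm_num)
  have hlt : Real.sqrt 2 < 2 := by
    nlinarith [Real.sqrt_nonneg 2]
  refine ⟨s^2 * (4 - 2 * Real.sqrt 2), by nlinarith [pow_pos hs 2], ?_⟩
  simp only [X, Prod.smul_mk, smul_eq_mul, Prod.mk.injEq]
  refine ⟨?_, ?_, ?_⟩ <;> nlinarith [sq_nonneg s, h2]
end

section
/- Exactly four rays from the origin in the open first octant are invariant under the vector field X(x,y,z) = (6yz + x² − y² − z², 6xz + y² − x² − z², 6xy + z² − y² − x²), namely those with direction vectors (1,1,1), (1, 2+2√2, 1), (2+2√2, 1, 1), and ((−1+√2)/2, (−1+√2)/2, 1) (up to positive scaling). That is, if v = (a,b,c) with a,b,c > 0 and X(v) = μ·v for some real μ, then v is a positive multiple of one of these four vectors. -/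
/-- Exactly four invariant rays of X in the open first octant: any direction (a,b,c)
with a,b,c > 0 satisfying X(a,b,c) = μ·(a,b,c) is a positive multiple of (1,1,1),
(1, 2+2√2, 1), (2+2√2, 1, 1) or ((−1+√2)/2, (−1+√2)/2, 1). -/
theorem stmt7 (a b c : ℝ) (ha : 0 < a) (hb : 0 < b) (hc : 0 < c)
    (h : ∃ μ : ℝ, X (a, b, c) = μ • ((a, b, c) : ℝ × ℝ × ℝ)) :
    ∃ s : ℝ, 0 < s ∧
      ((a, b, c) = s • ((1 : ℝ), (1 : ℝ), (1 : ℝ)) ∨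
       (a, b, c) = s • ((1 : ℝ), 2 + 2*Real.sqrt 2, (1 : ℝ)) ∨
       (a, b, c) = s • ((2 + 2*Real.sqrt 2 : ℝ), (1 : ℝ), (1 : ℝ)) ∨
       (a, b, c) = s • (((-1 + Real.sqrt 2)/2 : ℝ), ((-1 + Real.sqrt 2)/2 : ℝ), (1 : ℝ))) := by
  obtain ⟨μ, hμ⟩ := h
  simp only [X, Prod.smul_mk, smul_eq_mul, Prod.mk.injEq] at hμ
  obtain ⟨e1, e2, e3⟩ := hμ
  have sq2 : Real.sqrt 2 ^ 2 = 2 := Real.sq_sqrt (by norm_num)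
  have s2pos : 1 < Real.sqrt 2 := by
    nlinarith [Real.sqrt_nonneg 2, sq2]
  by_cases hab : a = b
  · by_cases hbc : b = c
    · refine ⟨a, ha, Or.inl ?_⟩
      simp only [Prod.smul_mk, smul_eq_mul, Prod.mk.injEq, mul_one]
      exact ⟨trivial, hab.symm, (hbc ▸ hab).symm⟩
    · -- a = b, b ≠ c : direction ((√2−1)/2, (√2−1)/2, 1)
      have hμval : μ = 2*(b+c) - 6*a := by
        have h' : (b - c) * (2*(b+c) - 6*a - μ) = 0 := by linear_combination e2 - e3
        rcases mul_eq_zero.mp h' with h0 | h0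
        · exact absurd (sub_eq_zero.mp h0) hbc
        · linarith [sub_eq_zero.mp (h0)]
      have hquad : c^2 - 4*a*c - 4*a^2 = 0 := by
        subst hab hμval; linear_combination -e1
      have hfac : (c - (2 + 2*Real.sqrt 2)*a) * (c - (2 - 2*Real.sqrt 2)*a) = 0 := by
        linear_combination hquad - 4*a^2*sq2
      have hpos2 : c - (2 - 2*Real.sqrt 2)*a > 0 := by nlinarith
      have hc2 : c = (2 + 2*Real.sqrt 2)*a := by
        rcases mul_eq_zero.mp hfac with h0 | h0
        · linarith [sub_eq_zero.mp h0]
        · linarith [sub_eq_zero.mp h0]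
      refine ⟨c, hc, Or.inr (Or.inr (Or.inr ?_))⟩
      simp only [Prod.smul_mk, smul_eq_mul, Prod.mk.injEq, mul_one]
      have haval : a = c * ((-1 + Real.sqrt 2)/2) := by
        rw [hc2]; ring_nf; nlinarith [sq2]
      exact ⟨haval, hab ▸ haval, trivial⟩
  · by_cases hac : a = c
    · -- a = c, a ≠ b : direction (1, 2+2√2, 1)
      have hμval : μ = 2*(a+b) - 6*c := by
        have h' : (a - b) * (2*(a+b) - 6*c - μ) = 0 := by linear_combination e1 - e2
        rcases mul_eq_zero.mp h' with h0 | h0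
        · exact absurd (sub_eq_zero.mp h0) hab
        · linarith [sub_eq_zero.mp h0]
      have hquad : b^2 - 4*a*b - 4*a^2 = 0 := by
        subst hac hμval; linear_combination -e3
      have hfac : (b - (2 + 2*Real.sqrt 2)*a) * (b - (2 - 2*Real.sqrt 2)*a) = 0 := by
        linear_combination hquad - 4*a^2*sq2
      have hpos2 : b - (2 - 2*Real.sqrt 2)*a > 0 := by nlinarith
      have hb2 : b = (2 + 2*Real.sqrt 2)*a := by
        rcases mul_eq_zero.mp hfac with h0 | h0
        · linarith [sub_eq_zero.mp h0]
        · linarith [sub_eq_zero.mp h0]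
      refine ⟨a, ha, Or.inr (Or.inl ?_)⟩
      simp only [Prod.smul_mk, smul_eq_mul, Prod.mk.injEq, mul_one]
      exact ⟨trivial, by rw [hb2]; ring, hac.symm⟩
    · by_cases hbc : b = c
      · -- b = c, a ≠ b : direction (2+2√2, 1, 1)
        have hμval : μ = 2*(a+b) - 6*c := by
          have h' : (a - b) * (2*(a+b) - 6*c - μ) = 0 := by linear_combination e1 - e2
          rcases mul_eq_zero.mp h' with h0 | h0
          · exact absurd (sub_eq_zero.mp h0) hab
          · linarith [sub_eq_zero.mp h0]
        have hquad : a^2 - 4*a*b - 4*b^2 = 0 := by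
          subst hbc hμval; linear_combination -e2
        have hfac : (a - (2 + 2*Real.sqrt 2)*b) * (a - (2 - 2*Real.sqrt 2)*b) = 0 := by
          linear_combination hquad - 4*b^2*sq2
        have hpos2 : a - (2 - 2*Real.sqrt 2)*b > 0 := by nlinarith
        have ha2 : a = (2 + 2*Real.sqrt 2)*b := by
          rcases mul_eq_zero.mp hfac with h0 | h0
          · linarith [sub_eq_zero.mp h0]
          · linarith [sub_eq_zero.mp h0]
        refine ⟨b, hb, Or.inr (Or.inr (Or.inl ?_))⟩
        simp only [Prod.smul_mk, smul_eq_mul, Prod.mk.injEq, mul_one]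
        exact ⟨by rw [ha2]; ring, trivial, hbc.symm⟩
      · -- all distinct : contradiction
        exfalso
        have h1 : (a - b) * (2*(a+b) - 6*c - μ) = 0 := by linear_combination e1 - e2
        have h2 : (b - c) * (2*(b+c) - 6*a - μ) = 0 := by linear_combination e2 - e3
        have hμ1 : μ = 2*(a+b) - 6*c := by
          rcases mul_eq_zero.mp h1 with h0 | h0
          · exact absurd (sub_eq_zero.mp h0) hab
          · linarith [sub_eq_zero.mp h0]
        have hμ2 : μ = 2*(b+c) - 6*a := by
          rcases mul_eq_zero.mp h2 with h0 | h0
          · exact absurd (sub_eq_zero.mp h0) hbc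
          · linarith [sub_eq_zero.mp h0]
        exact hac (by linarith)
end
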